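/- arXiv:1208.5258 — 7 statements merged into one kernel-verified Lean document; each statement's English description precedes it below -/
import Mathlib

section
/- The determinacy relation generated by the rules (Summation: {(q_1,v_1),...,(q_k,v_k)} → (q_1+...+q_k, v_1+...+v_k); Scalar multiplication: (q,v) → (cq, c²v) for any c ∈ ℝ; Relaxation: (q,v) → (q,v') for v ≤ v'; Transitivity) holds between a multiset S = {(q_1,v_1),...,(q_m,v_m)} and a query (q,v) if and only if there exist c_1,...,c_m ∈ ℝ with c_1 q_1 + ... + c_m q_m = q and c_1² v_1 + ... + c_m² v_m ≤ v. -/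
/-- The determinacy relation of Definition 3.4, generated by Summation,
Scalar multiplication, Relaxation and Transitivity.  Multisets of queries
are represented as lists of pairs (query vector, variance). -/
inductive Det {n : ℕ} : List ((Fin n → ℝ) × ℝ) → ((Fin n → ℝ) × ℝ) → Prop
  | summation (L : List ((Fin n → ℝ) × ℝ)) :
      Det L (((L.map Prod.fst).sum), ((L.map Prod.snd).sum))
  | scalar (q : Fin n → ℝ) (v : ℝ) (c : ℝ) :
      Det [(q, v)] (c • q, c ^ 2 * v)
  | relax (q : Fin n → ℝ) (v v' : ℝ) :
      v ≤ v' → Det [(q, v)] (q, v')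
  | trans (k : ℕ) (Ls : Fin k → List ((Fin n → ℝ) × ℝ))
      (Qs : Fin k → (Fin n → ℝ) × ℝ) (Q : (Fin n → ℝ) × ℝ) :
      (∀ i, Det (Ls i) (Qs i)) → Det (List.ofFn Qs) Q →
      Det ((List.ofFn Ls).flatten) Q


/-! Representations `q = ∑ cᵢ • qᵢ` with `∑ cᵢ² vᵢ ≤ v` are closed under the four rules:
for transitivity, substituting representations into one another multiplies the coefficients,
and the variance bounds scale by `a²` just as the scalar rule prescribes. Conversely, scaling each
`(qᵢ, vᵢ)` by `cᵢ`, summing and relaxing derives `(q, v)`. -/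

theorem List.flatten_ofFn_singleton_get {α : Type*} (l : List α) :
    (List.ofFn fun i => [l.get i]).flatten = l := by
  conv_rhs => rw [← List.flatMap_singleton' l, ← List.ofFn_get l]
  rw [List.flatMap_def, List.map_ofFn]
  rfl

section

variable {E : Type*} [AddCommMonoid E] [Module ℝ E]

def Representable (S : List (E × ℝ)) (Q : E × ℝ) : Prop :=
  ∃ c : Fin S.length → ℝ, ∑ i, c i • (S.get i).1 = Q.1 ∧ ∑ i, c i ^ 2 * (S.get i).2 ≤ Q.2

namespace Representable

theorem nil_iff {Q : E × ℝ} : Representable [] Q ↔ Q.1 = 0 ∧ 0 ≤ Q.2 := by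
  simp [Representable, eq_comm]

theorem cons_iff {p : E × ℝ} {S : List (E × ℝ)} {Q : E × ℝ} :
    Representable (p :: S) Q ↔
      ∃ a R, Representable S R ∧ Q.1 = a • p.1 + R.1 ∧ a ^ 2 * p.2 + R.2 ≤ Q.2 := by
  constructor
  · rintro ⟨c, hq, hv⟩
    refine ⟨c 0, (∑ i, c i.succ • (S.get i).1, ∑ i, c i.succ ^ 2 * (S.get i).2),
      ⟨fun i => c i.succ, rfl, le_rfl⟩, ?_, ?_⟩
    · simp [← hq, Fin.sum_univ_succ]
    · simpa [Fin.sum_univ_succ] using hv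
  · rintro ⟨a, R, ⟨c, hq, hv⟩, hq', hv'⟩
    refine ⟨Fin.cons a c, ?_, ?_⟩
    · simp [Fin.sum_univ_succ, hq', ← hq]
    · simpa [Fin.sum_univ_succ] using (add_le_add le_rfl hv).trans hv'

theorem mono {S : List (E × ℝ)} {Q Q' : E × ℝ} (h : Representable S Q) (h₁ : Q.1 = Q'.1)
    (h₂ : Q.2 ≤ Q'.2) : Representable S Q' := by
  obtain ⟨c, hq, hv⟩ := h
  exact ⟨c, hq.trans h₁, hv.trans h₂⟩

theorem smul {S : List (E × ℝ)} {Q : E × ℝ} (h : Representable S Q) (a : ℝ) :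
    Representable S (a • Q.1, a ^ 2 * Q.2) := by
  obtain ⟨c, hq, hv⟩ := h
  refine ⟨fun i => a * c i, ?_, ?_⟩
  · simp only [mul_smul, ← Finset.smul_sum, hq]
  · calc ∑ i, (a * c i) ^ 2 * (S.get i).2 = a ^ 2 * ∑ i, c i ^ 2 * (S.get i).2 := by
          rw [Finset.mul_sum]; congr 1; ext i; ring
      _ ≤ a ^ 2 * Q.2 := mul_le_mul_of_nonneg_left hv (sq_nonneg a)

theorem append {S₁ S₂ : List (E × ℝ)} {Q₁ Q₂ : E × ℝ} (h₁ : Representable S₁ Q₁)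
    (h₂ : Representable S₂ Q₂) : Representable (S₁ ++ S₂) (Q₁ + Q₂) := by
  induction S₁ generalizing Q₁ with
  | nil =>
    obtain ⟨hq, hv⟩ := nil_iff.mp h₁
    exact h₂.mono (by simp [hq]) (by simpa using hv)
  | cons p S₁ ih =>
    obtain ⟨a, R, hR, hq, hv⟩ := cons_iff.mp h₁
    refine cons_iff.mpr ⟨a, R + Q₂, ih hR, ?_, ?_⟩
    · simp [hq, add_assoc]
    · rw [Prod.snd_add, Prod.snd_add, ← add_assoc]
      exact add_le_add hv le_rfl

theorem sum (L : List (E × ℝ)) :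
    Representable L ((L.map Prod.fst).sum, (L.map Prod.snd).sum) := by
  induction L with
  | nil => exact nil_iff.mpr ⟨rfl, le_rfl⟩
  | cons p L ih => exact cons_iff.mpr ⟨1, _, ih, by simp, by simp⟩

theorem singleton (p : E × ℝ) : Representable [p] p := by
  simpa using sum [p]

theorem flatten_ofFn {k : ℕ} {Ls : Fin k → List (E × ℝ)} {Qs : Fin k → E × ℝ}
    (hLs : ∀ i, Representable (Ls i) (Qs i)) {Q : E × ℝ}
    (hQ : Representable (List.ofFn Qs) Q) : Representable (List.ofFn Ls).flatten Q := by
  induction k generalizing Q with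
  | zero => simpa using hQ
  | succ k ih =>
    rw [List.ofFn_succ] at hQ ⊢
    obtain ⟨a, R, hR, hq, hv⟩ := cons_iff.mp hQ
    exact (((hLs 0).smul a).append (ih (fun i => hLs i.succ) hR)).mono hq.symm hv

end Representable

end

theorem Det.representable {n : ℕ} {S : List ((Fin n → ℝ) × ℝ)} {Q : (Fin n → ℝ) × ℝ}
    (h : Det S Q) : Representable S Q := by
  induction h with
  | summation L => exact .sum L
  | scalar q v c => exact (Representable.singleton (q, v)).smul c
  | relax q v v' hv => exact (Representable.singleton (q, v)).mono rfl hv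
  | trans k Ls Qs Q _ _ hLs hQ => exact .flatten_ofFn hLs hQ

theorem Det.comp_singleton {n : ℕ} {S : List ((Fin n → ℝ) × ℝ)} {Q Q' : (Fin n → ℝ) × ℝ}
    (h : Det S Q) (h' : Det [Q] Q') : Det S Q' := by
  simpa using Det.trans 1 (fun _ => S) (fun _ => Q) Q' (fun _ => h) (by simpa using h')

theorem Det.sum_smul {n : ℕ} (S : List ((Fin n → ℝ) × ℝ)) (c : Fin S.length → ℝ) :
    Det S (∑ i, c i • (S.get i).1, ∑ i, c i ^ 2 * (S.get i).2) := by
  have hscaled := Det.trans S.length (fun i => [S.get i])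
    (fun i => (c i • (S.get i).1, c i ^ 2 * (S.get i).2)) _
    (fun i => Det.scalar _ _ (c i)) (Det.summation _)
  simpa only [List.flatten_ofFn_singleton_get, List.map_ofFn, List.sum_ofFn,
    Function.comp_apply] using hscaled

theorem Det.of_representable {n : ℕ} {S : List ((Fin n → ℝ) × ℝ)} {Q : (Fin n → ℝ) × ℝ}
    (h : Representable S Q) : Det S Q := by
  obtain ⟨c, hq, hv⟩ := h
  exact (Det.sum_smul S c).comp_singleton (hq ▸ Det.relax _ _ _ hv)

/-- determinacy S → (q,v) holds iff there exist coefficients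
c with ∑ c_i q_i = q and ∑ c_i² v_i ≤ v. -/
theorem determinacy_iff_coeffs {n : ℕ}
    (S : List ((Fin n → ℝ) × ℝ)) (q : Fin n → ℝ) (v : ℝ) :
    Det S (q, v) ↔
      ∃ c : Fin S.length → ℝ,
        ∑ i, c i • (S.get i).1 = q ∧ ∑ i, (c i) ^ 2 * (S.get i).2 ≤ v :=
  ⟨Det.representable, fun h => Det.of_representable h⟩
end

section
/- If π is an arbitrage-free price function that is continuous (in v, for each fixed q, and in q at q=0), then lim_{v→∞} π(q, v) = 0 for every query vector q. -/
/-!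
Buying a query `q` at variance `v` is equivalent (by rescaling) to buying `q / √v` at variance `1`,
so `π q v ≤ π (q / √v) 1`. As `v → ∞`, `q / √v → 0`, and continuity at `0` together with
`π 0 1 = 0` forces the price to `0`.
-/

/-- A price function `π (q, v)` is arbitrage-free if whenever a multiset of
queries {(q_i, v_i)} determines (q, v), i.e. there are coefficients c with
∑ c_i q_i = q and ∑ c_i² v_i ≤ v, then π(q,v) ≤ ∑ π(q_i,v_i). -/
def ArbitrageFree {n : ℕ} (π : (Fin n → ℝ) → ℝ → ℝ) : Prop :=
  ∀ (m : ℕ) (qs : Fin m → Fin n → ℝ) (vs : Fin m → ℝ) (q : Fin n → ℝ)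
    (v : ℝ) (c : Fin m → ℝ),
    (∀ i, 0 ≤ vs i) → 0 ≤ v →
    ∑ i, c i • qs i = q → ∑ i, (c i) ^ 2 * vs i ≤ v →
    π q v ≤ ∑ i, π (qs i) (vs i)

open Filter Topology

namespace ArbitrageFree

variable {n : ℕ} {π : (Fin n → ℝ) → ℝ → ℝ}

/-- The empty family of queries determines `(0, v)`. -/
theorem apply_zero_nonpos (haf : ArbitrageFree π) {v : ℝ} (hv : 0 ≤ v) : π 0 v ≤ 0 := by
  simpa using haf 0 Fin.elim0 Fin.elim0 0 v Fin.elim0 (fun i => i.elim0) hv (by simp) (by simp [hv])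

theorem apply_smul_le (haf : ArbitrageFree π) (q : Fin n → ℝ) {c v w : ℝ} (hw : 0 ≤ w)
    (hv : 0 ≤ v) (hcw : c ^ 2 * w ≤ v) : π (c • q) v ≤ π q w := by
  simpa using haf 1 (fun _ => q) (fun _ => w) (c • q) v (fun _ => c) (fun _ => hw) hv
    (by simp) (by simpa using hcw)

theorem apply_le_apply_inv_sqrt_smul (haf : ArbitrageFree π) (q : Fin n → ℝ) {v : ℝ}
    (hv : 0 < v) : π q v ≤ π ((√v)⁻¹ • q) 1 := by
  have hsqrt : √v ≠ 0 := (Real.sqrt_pos.2 hv).ne'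
  have h := haf.apply_smul_le ((√v)⁻¹ • q) zero_le_one hv.le (c := √v)
    (by rw [Real.sq_sqrt hv.le, mul_one])
  rwa [smul_inv_smul₀ hsqrt] at h

end ArbitrageFree

theorem tendsto_inv_sqrt_smul_atTop_zero {E : Type*} [NormedAddCommGroup E] [NormedSpace ℝ E]
    (x : E) : Tendsto (fun v : ℝ => (√v)⁻¹ • x) atTop (𝓝 0) := by
  simpa using (tendsto_inv_atTop_zero.comp Real.tendsto_sqrt_atTop).smul_const x

theorem infinite_noise_is_free_general {n : ℕ} (π : (Fin n → ℝ) → ℝ → ℝ)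
    (hpos : ∀ q v, 0 ≤ π q v) (haf : ArbitrageFree π)
    (hcontq : ∀ v : ℝ, 0 ≤ v → ContinuousAt (fun q => π q v) (0 : Fin n → ℝ))
    (q : Fin n → ℝ) :
    Filter.Tendsto (fun v => π q v) Filter.atTop (nhds 0) := by
  have hzero : π 0 1 = 0 := le_antisymm (haf.apply_zero_nonpos zero_le_one) (hpos 0 1)
  have hbound : Tendsto (fun v : ℝ => π ((√v)⁻¹ • q) 1) atTop (𝓝 0) := by
    have h := (hcontq 1 zero_le_one).tendsto.comp (tendsto_inv_sqrt_smul_atTop_zero q)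
    rwa [hzero] at h
  refine squeeze_zero' (Eventually.of_forall fun v => hpos q v) ?_ hbound
  filter_upwards [eventually_gt_atTop 0] with v hv using haf.apply_le_apply_inv_sqrt_smul q hv

/-- for a continuous arbitrage-free price function, infinite
noise is free: π(q, v) → 0 as v → ∞. -/
theorem infinite_noise_is_free {n : ℕ} (π : (Fin n → ℝ) → ℝ → ℝ)
    (hpos : ∀ q v, 0 ≤ π q v) (haf : ArbitrageFree π)
    (hcontv : ∀ q, ContinuousOn (fun v => π q v) (Set.Ici (0 : ℝ)))
    (hcontq : ∀ v : ℝ, 0 ≤ v → ContinuousAt (fun q => π q v) (0 : Fin n → ℝ))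
    (q : Fin n → ℝ) :
    Filter.Tendsto (fun v => π q v) Filter.atTop (nhds 0) :=
  infinite_noise_is_free_general π hpos haf hcontq q
end

section
/- For any non-trivial arbitrage-free price function π and any query vector q with π(q,1) > 0, the price cannot decay faster than 1/v: there is no sequence v_i → ∞ with v_i · π(q, v_i) → 0. Equivalently, liminf_{v→∞} v·π(q,v) > 0 whenever π(q,1) > 0. -/
namespace ArbitrageFree

variable {n : ℕ} {π : (Fin n → ℝ) → ℝ → ℝ}

theorem apply_le_nat_mul_apply (haf : ArbitrageFree π) (q : Fin n → ℝ) {v w : ℝ} {m : ℕ}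
    (hm : 0 < m) (hv : 0 ≤ v) (hvw : v ≤ m * w) : π q w ≤ m * π q v := by
  have hmR : (0 : ℝ) < m := Nat.cast_pos.mpr hm
  have hw : 0 ≤ w := nonneg_of_mul_nonneg_right (hv.trans hvw) hmR
  have hq : ∑ _i : Fin m, (1 / (m : ℝ)) • q = q := by
    rw [Finset.sum_const, Finset.card_univ, Fintype.card_fin, ← Nat.cast_smul_eq_nsmul ℝ,
      smul_smul, mul_one_div_cancel hmR.ne', one_smul]
  have hvar : ∑ _i : Fin m, (1 / (m : ℝ)) ^ 2 * v ≤ w := by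
    rw [Finset.sum_const, Finset.card_univ, Fintype.card_fin, nsmul_eq_mul]
    calc (m : ℝ) * ((1 / m) ^ 2 * v) = v / m := by field_simp
      _ ≤ w := (div_le_iff₀' hmR).mpr hvw
  simpa [Finset.sum_const] using haf m (fun _ => q) (fun _ => v) q w _ (fun _ => hv) hw hq hvar

theorem apply_one_le_two_mul_mul_apply (haf : ArbitrageFree π) (q : Fin n → ℝ)
    (hq : 0 ≤ π q 1) {v : ℝ} (hv : 1 ≤ v) : π q 1 ≤ 2 * (v * π q v) := by
  have hceil_pos : 0 < ⌈v⌉₊ := Nat.ceil_pos.mpr (by linarith)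
  have hceil_le : (⌈v⌉₊ : ℝ) ≤ 2 * v := by
    linarith [Nat.ceil_lt_add_one (zero_le_one.trans hv)]
  have hle := haf.apply_le_nat_mul_apply q (w := 1) hceil_pos (by linarith)
    (by simpa using Nat.le_ceil v)
  have hpv : 0 ≤ π q v :=
    nonneg_of_mul_nonneg_right (hq.trans hle) (Nat.cast_pos.mpr hceil_pos)
  calc π q 1 ≤ ⌈v⌉₊ * π q v := hle
    _ ≤ 2 * v * π q v := mul_le_mul_of_nonneg_right hceil_le hpv
    _ = 2 * (v * π q v) := mul_assoc _ _ _

end ArbitrageFree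

theorem price_decay_lower_bound_general {n : ℕ} (π : (Fin n → ℝ) → ℝ → ℝ)
    (haf : ArbitrageFree π)
    (q : Fin n → ℝ) (hq : 0 < π q 1) :
    ¬ ∃ vs : ℕ → ℝ,
        Filter.Tendsto vs Filter.atTop Filter.atTop ∧
        Filter.Tendsto (fun i => vs i * π q (vs i)) Filter.atTop (nhds 0) := by
  rintro ⟨vs, htop, hzero⟩
  have hbound : ∀ᶠ i in Filter.atTop, π q 1 / 2 ≤ vs i * π q (vs i) :=
    (htop.eventually_ge_atTop 1).mono fun i hi => by
      linarith [haf.apply_one_le_two_mul_mul_apply q hq.le hi]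
  linarith [ge_of_tendsto hzero hbound]

/-- the price of an arbitrage-free price function cannot decay
faster than 1/v: if π(q,1) > 0 there is no sequence v_i → ∞ with
v_i · π(q, v_i) → 0. -/
theorem price_decay_lower_bound {n : ℕ} (π : (Fin n → ℝ) → ℝ → ℝ)
    (hpos : ∀ q v, 0 ≤ π q v) (haf : ArbitrageFree π)
    (q : Fin n → ℝ) (hq : 0 < π q 1) :
    ¬ ∃ vs : ℕ → ℝ,
        Filter.Tendsto vs Filter.atTop Filter.atTop ∧
        Filter.Tendsto (fun i => vs i * π q (vs i)) Filter.atTop (nhds 0) :=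
  price_decay_lower_bound_general π haf q hq
end

section
/- Let π(q,v) = f(q)²/v for some function f : ℝ^n → [0,∞) (with π(q,0) = ∞ when f(q) > 0, π(q,0) = 0 when f(q)=0). Then π is arbitrage-free if and only if f is a seminorm, i.e., f(cq) = |c|·f(q) for all scalars c and f(q_1 + q_2) ≤ f(q_1) + f(q_2). -/
/-!
Buying `c` units of a single asset `q` at volume `1` gives the position `c • q` at volume `c²`,
so arbitrage-freeness bounds `f (c • q)² / c²` by `f q²`; this is the inequality half of
homogeneity, which upgrades itself to equality by applying it to `c⁻¹`. At volume `f q` the asset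
`q` costs exactly `f q`, so holding `q₁` and `q₂` at volumes `f q₁` and `f q₂` yields
`f (q₁ + q₂)² / (f q₁ + f q₂) ≤ f q₁ + f q₂`, which is subadditivity.

Conversely, for a seminorm `f` and a portfolio `∑ cᵢ • qᵢ = q` we have
`f q ≤ ∑ |cᵢ| f qᵢ`, and Cauchy–Schwarz gives
`(∑ |cᵢ| f qᵢ)² ≤ (∑ cᵢ² vᵢ) (∑ f qᵢ² / vᵢ) ≤ v ∑ π (qᵢ, vᵢ)`, unless some summand with
`vᵢ = 0` and `f qᵢ ≠ 0` makes the right-hand side `∞`.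
-/

open scoped ENNReal

/-- Arbitrage-freeness for a price function with values in [0,∞]. -/
def ArbitrageFreeE {n : ℕ} (π : (Fin n → ℝ) → ℝ → ℝ≥0∞) : Prop :=
  ∀ (m : ℕ) (qs : Fin m → Fin n → ℝ) (vs : Fin m → ℝ) (q : Fin n → ℝ)
    (v : ℝ) (c : Fin m → ℝ),
    (∀ i, 0 ≤ vs i) → 0 ≤ v →
    ∑ i, c i • qs i = q → ∑ i, (c i) ^ 2 * vs i ≤ v →
    π q v ≤ ∑ i, π (qs i) (vs i)

open Finset

theorem ENNReal.ofReal_div_ofReal_le_ofReal_iff {x v w : ℝ} (hv : 0 ≤ v) (hw : 0 ≤ w) :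
    ENNReal.ofReal x / ENNReal.ofReal v ≤ ENNReal.ofReal w ↔ x ≤ v * w := by
  rcases hv.eq_or_lt with rfl | hv
  · rcases le_or_gt x 0 with hx | hx
    · simp [ENNReal.ofReal_of_nonpos hx, hx]
    · simp [ENNReal.div_zero (ENNReal.ofReal_pos.2 hx).ne', hx.not_ge]
  · rw [ENNReal.div_le_iff (ENNReal.ofReal_pos.2 hv).ne' ENNReal.ofReal_ne_top,
      ← ENNReal.ofReal_mul hw, ENNReal.ofReal_le_ofReal_iff (mul_nonneg hw hv.le), mul_comm]

theorem Finset.sq_sum_abs_mul_le_sum_sq_mul_mul_sum_sq_div {ι : Type*} (s : Finset ι)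
    {c a v : ι → ℝ} (hv : ∀ i ∈ s, 0 ≤ v i) (ha : ∀ i ∈ s, v i = 0 → a i = 0) :
    (∑ i ∈ s, |c i| * a i) ^ 2 ≤ (∑ i ∈ s, c i ^ 2 * v i) * ∑ i ∈ s, a i ^ 2 / v i := by
  refine sum_sq_le_sum_mul_sum_of_sq_le_mul s (fun i hi => mul_nonneg (sq_nonneg _) (hv i hi))
    (fun i hi => div_nonneg (sq_nonneg _) (hv i hi)) fun i hi => ?_
  rcases (hv i hi).eq_or_lt with h | h
  · simp [ha i hi h.symm]
  · rw [mul_pow, sq_abs, mul_assoc, mul_div_cancel₀ _ h.ne']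

theorem Seminorm.map_sum_smul_le {𝕜 E ι : Type*} [SeminormedRing 𝕜] [AddCommGroup E]
    [Module 𝕜 E] (p : Seminorm 𝕜 E) (s : Finset ι) (c : ι → 𝕜) (x : ι → E) :
    p (∑ i ∈ s, c i • x i) ≤ ∑ i ∈ s, ‖c i‖ * p (x i) :=
  (le_sum_of_subadditive p (map_zero p).le (map_add_le_add p) s _).trans_eq
    (sum_congr rfl fun i _ => map_smul_eq_mul p (c i) (x i))

noncomputable def sqPrice {E : Type*} (f : E → ℝ) (q : E) (v : ℝ) : ℝ≥0∞ :=
  ENNReal.ofReal (f q ^ 2) / ENNReal.ofReal v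

section sqPrice

variable {E : Type*} (f : E → ℝ) {q : E} {v : ℝ}

theorem sqPrice_le_ofReal_iff {w : ℝ} (hv : 0 ≤ v) (hw : 0 ≤ w) :
    sqPrice f q v ≤ ENNReal.ofReal w ↔ f q ^ 2 ≤ v * w :=
  ENNReal.ofReal_div_ofReal_le_ofReal_iff hv hw

theorem sqPrice_one : sqPrice f q 1 = ENNReal.ofReal (f q ^ 2) := by
  simp [sqPrice]

theorem sqPrice_zero_right (hq : f q ≠ 0) : sqPrice f q 0 = ⊤ := by
  rw [sqPrice, ENNReal.ofReal_zero, ENNReal.div_zero (ENNReal.ofReal_pos.2 (by positivity)).ne']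

theorem sqPrice_eq_ofReal (h : 0 < v ∨ f q = 0) :
    sqPrice f q v = ENNReal.ofReal (f q ^ 2 / v) := by
  rcases h with hv | hq
  · exact (ENNReal.ofReal_div_of_pos hv).symm
  · simp [sqPrice, hq]

theorem sqPrice_self (hq : 0 ≤ f q) : sqPrice f q (f q) = ENNReal.ofReal (f q) := by
  rw [sqPrice_eq_ofReal f (hq.lt_or_eq.imp_right Eq.symm), sq, mul_self_div_self]

end sqPrice

namespace ArbitrageFreeE

variable {n : ℕ} {f : (Fin n → ℝ) → ℝ}

theorem apply_smul_le_abs_mul (h : ArbitrageFreeE (sqPrice f)) (hf : ∀ q, 0 ≤ f q) (c : ℝ)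
    (q : Fin n → ℝ) : f (c • q) ≤ |c| * f q := by
  have key := h 1 (fun _ => q) (fun _ => 1) (c • q) (c ^ 2) (fun _ => c)
    (fun _ => zero_le_one) (sq_nonneg c) (by simp) (by simp)
  rw [Fin.sum_univ_one, sqPrice_one, sqPrice_le_ofReal_iff f (sq_nonneg c) (sq_nonneg _)] at key
  exact (sq_le_sq₀ (hf _) (mul_nonneg (abs_nonneg c) (hf q))).1 (by rwa [mul_pow, sq_abs])

theorem apply_add_le (h : ArbitrageFreeE (sqPrice f)) (hf : ∀ q, 0 ≤ f q)
    (q₁ q₂ : Fin n → ℝ) : f (q₁ + q₂) ≤ f q₁ + f q₂ := by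
  have hv := add_nonneg (hf q₁) (hf q₂)
  have key := h 2 ![q₁, q₂] ![f q₁, f q₂] (q₁ + q₂) (f q₁ + f q₂) ![1, 1]
    (fun i => by fin_cases i <;> simp [hf]) hv (by simp) (by simp)
  rw [Fin.sum_univ_two] at key
  simp only [Matrix.cons_val_zero, Matrix.cons_val_one] at key
  rw [sqPrice_self f (hf _), sqPrice_self f (hf _), ← ENNReal.ofReal_add (hf _) (hf _),
    sqPrice_le_ofReal_iff f hv hv] at key
  exact (sq_le_sq₀ (hf _) hv).1 (by rwa [← sq] at key)

theorem exists_seminorm_eq (h : ArbitrageFreeE (sqPrice f)) (hf : ∀ q, 0 ≤ f q) :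
    ∃ p : Seminorm ℝ (Fin n → ℝ), ⇑p = f := by
  have h0 : f 0 = 0 :=
    le_antisymm (by simpa using h.apply_smul_le_abs_mul hf 0 0) (hf 0)
  exact ⟨Seminorm.ofSMulLE f h0 (h.apply_add_le hf)
    fun c q => by simpa using h.apply_smul_le_abs_mul hf c q, rfl⟩

end ArbitrageFreeE

theorem Seminorm.arbitrageFreeE_sqPrice {n : ℕ} (p : Seminorm ℝ (Fin n → ℝ)) :
    ArbitrageFreeE (sqPrice p) := by
  intro m qs vs q v c hvs hv hq hcv
  by_cases hinf : ∃ i, vs i = 0 ∧ p (qs i) ≠ 0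
  · obtain ⟨i, hvi, hpi⟩ := hinf
    have hsum : ∑ j, sqPrice p (qs j) (vs j) = ⊤ :=
      ENNReal.sum_eq_top.2 ⟨i, mem_univ i, by rw [hvi, sqPrice_zero_right _ hpi]⟩
    exact hsum ▸ le_top
  push Not at hinf
  have hterm (i : Fin m) : sqPrice p (qs i) (vs i) = ENNReal.ofReal (p (qs i) ^ 2 / vs i) :=
    sqPrice_eq_ofReal _ ((hvs i).lt_or_eq.imp_right fun h => hinf i h.symm)
  have hS : 0 ≤ ∑ i, p (qs i) ^ 2 / vs i := sum_nonneg fun i _ => div_nonneg (sq_nonneg _) (hvs i)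
  rw [sum_congr rfl fun i _ => hterm i, ← ENNReal.ofReal_sum_of_nonneg
    fun i _ => div_nonneg (sq_nonneg _) (hvs i), sqPrice_le_ofReal_iff _ hv hS]
  calc p q ^ 2 ≤ (∑ i, |c i| * p (qs i)) ^ 2 := by
        gcongr
        simpa [← hq] using p.map_sum_smul_le univ c qs
    _ ≤ (∑ i, c i ^ 2 * vs i) * ∑ i, p (qs i) ^ 2 / vs i :=
        sq_sum_abs_mul_le_sum_sq_mul_mul_sum_sq_div univ (fun i _ => hvs i) fun i _ => hinf i
    _ ≤ v * ∑ i, p (qs i) ^ 2 / vs i := by gcongr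

/-- the price function π(q,v) = f(q)²/v (with the convention
π(q,0) = ∞ when f(q) > 0 and π(q,0) = 0 when f(q) = 0, realised by ℝ≥0∞
division) is arbitrage-free iff f is a semi-norm. -/
theorem arbitrageFree_iff_seminorm {n : ℕ}
    (f : (Fin n → ℝ) → ℝ) (hf : ∀ q, 0 ≤ f q)
    (π : (Fin n → ℝ) → ℝ → ℝ≥0∞)
    (hπ : ∀ q v, π q v = ENNReal.ofReal (f q ^ 2) / ENNReal.ofReal v) :
    ArbitrageFreeE π ↔
      ((∀ (c : ℝ) (q : Fin n → ℝ), f (c • q) = |c| * f q) ∧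
        ∀ q₁ q₂ : Fin n → ℝ, f (q₁ + q₂) ≤ f q₁ + f q₂) := by
  obtain rfl : π = sqPrice f := funext₂ hπ
  constructor
  · intro h
    obtain ⟨p, rfl⟩ := h.exists_seminorm_eq hf
    exact ⟨fun c q => by simpa using map_smul_eq_mul p c q, map_add_le_add p⟩
  · rintro ⟨hsmul, hadd⟩
    exact (Seminorm.of f hadd (by simpa using hsmul)).arbitrageFreeE_sqPrice
end

section
/- If f is a seminorm on ℝ^n and there exist coefficients c_1,...,c_m with Σ c_i q_i = q and Σ c_i² v_i ≤ v (where all v_i > 0 and v > 0), then f(q)²/v ≤ Σ_{i=1}^m f(q_i)²/v_i. -/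
open Finset

namespace Seminorm

variable {E ι : Type*} [AddCommGroup E] [Module ℝ E] (p : Seminorm ℝ E) (s : Finset ι)
  (c : ι → ℝ) (x : ι → E) {w : ι → ℝ}

theorem map_sum_smul_le_s7 : p (∑ i ∈ s, c i • x i) ≤ ∑ i ∈ s, |c i| * p (x i) := by
  simpa only [map_smul_eq_mul, Real.norm_eq_abs] using
    le_sum_of_subadditive p (map_zero p).le (map_add_le_add p) s (fun i ↦ c i • x i)

/-- Cauchy–Schwarz, after splitting `|c i| * p (x i)` as
`(|c i| * √(w i)) * (p (x i) / √(w i))`. -/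
theorem sq_map_sum_smul_le (hw : ∀ i ∈ s, 0 < w i) :
    p (∑ i ∈ s, c i • x i) ^ 2 ≤ (∑ i ∈ s, c i ^ 2 * w i) * ∑ i ∈ s, p (x i) ^ 2 / w i := by
  calc p (∑ i ∈ s, c i • x i) ^ 2 ≤ (∑ i ∈ s, |c i| * p (x i)) ^ 2 :=
        pow_le_pow_left₀ (apply_nonneg _ _) (p.map_sum_smul_le_s7 s c x) 2
    _ ≤ (∑ i ∈ s, c i ^ 2 * w i) * ∑ i ∈ s, p (x i) ^ 2 / w i := by
      refine sum_sq_le_sum_mul_sum_of_sq_le_mul s (fun i hi ↦ by positivity [hw i hi])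
        (fun i hi ↦ by positivity [hw i hi]) fun i hi ↦ le_of_eq ?_
      rw [mul_pow, sq_abs]
      field_simp [(hw i hi).ne']

theorem sq_map_sum_smul_div_le (hw : ∀ i ∈ s, 0 < w i) {v : ℝ}
    (hv : ∑ i ∈ s, c i ^ 2 * w i ≤ v) :
    p (∑ i ∈ s, c i • x i) ^ 2 / v ≤ ∑ i ∈ s, p (x i) ^ 2 / w i := by
  have hvar : 0 ≤ ∑ i ∈ s, c i ^ 2 * w i := sum_nonneg fun i hi ↦ by positivity [hw i hi]
  have hprice : 0 ≤ ∑ i ∈ s, p (x i) ^ 2 / w i := sum_nonneg fun i hi ↦ by positivity [hw i hi]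
  refine div_le_of_le_mul₀ (hvar.trans hv) hprice ?_
  rw [mul_comm]
  exact (p.sq_map_sum_smul_le s c x hw).trans (mul_le_mul_of_nonneg_right hv hprice)

end Seminorm

theorem seminorm_price_arbitrage_free_general {n m : ℕ}
    (f : (Fin n → ℝ) → ℝ)
    (hhom : ∀ (c : ℝ) (q : Fin n → ℝ), f (c • q) = |c| * f q)
    (htri : ∀ q₁ q₂ : Fin n → ℝ, f (q₁ + q₂) ≤ f q₁ + f q₂)
    (qs : Fin m → Fin n → ℝ) (vs : Fin m → ℝ) (hvs : ∀ i, 0 < vs i)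
    (q : Fin n → ℝ) (v : ℝ) (c : Fin m → ℝ)
    (hlin : ∑ i, c i • qs i = q)
    (hvar : ∑ i, (c i) ^ 2 * vs i ≤ v) :
    f q ^ 2 / v ≤ ∑ i, f (qs i) ^ 2 / vs i := by
  let p : Seminorm ℝ (Fin n → ℝ) := .of f htri fun a x ↦ by rw [Real.norm_eq_abs, hhom]
  subst hlin
  exact p.sq_map_sum_smul_div_le univ c qs (fun i _ ↦ hvs i) hvar

/-- if f is a seminorm and ∑ c_i q_i = q, ∑ c_i² v_i ≤ v with
positive variances, then f(q)²/v ≤ ∑ f(q_i)²/v_i (arbitrage-freeness of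
π(q,v) = f(q)²/v, via Cauchy–Schwarz). -/
theorem seminorm_price_arbitrage_free {n m : ℕ}
    (f : (Fin n → ℝ) → ℝ) (hf : ∀ q, 0 ≤ f q)
    (hhom : ∀ (c : ℝ) (q : Fin n → ℝ), f (c • q) = |c| * f q)
    (htri : ∀ q₁ q₂ : Fin n → ℝ, f (q₁ + q₂) ≤ f q₁ + f q₂)
    (qs : Fin m → Fin n → ℝ) (vs : Fin m → ℝ) (hvs : ∀ i, 0 < vs i)
    (q : Fin n → ℝ) (v : ℝ) (hv : 0 < v) (c : Fin m → ℝ)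
    (hlin : ∑ i, c i • qs i = q)
    (hvar : ∑ i, (c i) ^ 2 * vs i ≤ v) :
    f q ^ 2 / v ≤ ∑ i, f (qs i) ^ 2 / vs i :=
  seminorm_price_arbitrage_free_general f hhom htri qs vs hvs q v c hlin hvar
end

section
/- Let f : [0,∞)^k → [0,∞) be non-decreasing with f(0) = 0 and continuous second partial derivatives. If ∂²f/∂x_i∂x_j ≤ 0 for all i, j, then f is subadditive: f(x + y) ≤ f(x) + f(y) for all x, y ∈ [0,∞)^k. -/
/-!
Nonpositive second partials make the bilinear form `D²f(z)` nonpositive on pairs of vectors of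
the orthant, so each directional derivative `Df(z) v` with `v ≥ 0` decreases as `z` moves into
the orthant. Hence `t ↦ f (x + t y) - f (t y)` is antitone on `[0, 1]`, and comparing `t = 1`
with `t = 0` gives `f (x + y) - f y ≤ f x - f 0`.
-/

open Set

theorem fderiv_clm_apply_const_apply {E F G : Type*} [NormedAddCommGroup E] [NormedSpace ℝ E]
    [NormedAddCommGroup F] [NormedSpace ℝ F] [NormedAddCommGroup G] [NormedSpace ℝ G]
    {c : E → F →L[ℝ] G} {x : E} (hc : DifferentiableAt ℝ c x) (u : E) (v : F) :
    fderiv ℝ (fun y => c y v) x u = fderiv ℝ c x u v := by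
  rw [fderiv_clm_apply hc (differentiableAt_const v)]
  simp

theorem hasDerivAt_comp_add_smul {E F : Type*} [NormedAddCommGroup E] [NormedSpace ℝ E]
    [NormedAddCommGroup F] [NormedSpace ℝ F] {h : E → F} {x y : E} {t : ℝ}
    (hh : DifferentiableAt ℝ h (x + t • y)) :
    HasDerivAt (fun s : ℝ => h (x + s • y)) (fderiv ℝ h (x + t • y) y) t := by
  have hline : HasDerivAt (fun s : ℝ => x + s • y) y t := by
    simpa using ((hasDerivAt_id t).smul_const y).const_add x
  exact hh.hasFDerivAt.comp_hasDerivAt t hline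

theorem le_of_hasDerivAt_nonpos {g g' : ℝ → ℝ} {a b : ℝ} (hab : a ≤ b)
    (hg : ∀ t, HasDerivAt g (g' t) t) (hg' : ∀ t ∈ Ioo a b, g' t ≤ 0) : g b ≤ g a := by
  refine antitoneOn_of_hasDerivWithinAt_nonpos (convex_Icc a b)
    (fun t _ => (hg t).continuousAt.continuousWithinAt) (fun t _ => (hg t).hasDerivWithinAt)
    (by rwa [interior_Icc]) (left_mem_Icc.2 hab) (right_mem_Icc.2 hab) hab

section Orthant

variable {ι : Type*} [Fintype ι]

theorem LinearMap.map_nonpos_of_single_nonpos [DecidableEq ι] (L : (ι → ℝ) →ₗ[ℝ] ℝ)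
    (hL : ∀ i, L (Pi.single i 1) ≤ 0) {v : ι → ℝ} (hv : 0 ≤ v) : L v ≤ 0 := by
  rw [← Finset.univ_sum_single v, map_sum]
  refine Finset.sum_nonpos fun i _ => ?_
  rw [show Pi.single i (v i) = v i • (Pi.single i 1 : ι → ℝ) by simp [← Pi.single_smul'],
    map_smul, smul_eq_mul]
  exact mul_nonpos_of_nonneg_of_nonpos (hv i) (hL i)

theorem ContinuousLinearMap.apply_apply_nonpos_of_single_nonpos [DecidableEq ι]
    (B : (ι → ℝ) →L[ℝ] (ι → ℝ) →L[ℝ] ℝ)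
    (hB : ∀ i j, B (Pi.single i 1) (Pi.single j 1) ≤ 0) {u v : ι → ℝ} (hu : 0 ≤ u)
    (hv : 0 ≤ v) : B u v ≤ 0 :=
  (B.flip v : (ι → ℝ) →ₗ[ℝ] ℝ).map_nonpos_of_single_nonpos
    (fun i => ((B (Pi.single i 1) : (ι → ℝ) →ₗ[ℝ] ℝ).map_nonpos_of_single_nonpos (hB i) hv)) hu

variable {f : (ι → ℝ) → ℝ}

theorem fderiv_apply_add_le (hf : Differentiable ℝ (fderiv ℝ f))
    (hD2 : ∀ z u v : ι → ℝ, 0 ≤ z → 0 ≤ u → 0 ≤ v → fderiv ℝ (fderiv ℝ f) z u v ≤ 0)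
    {z u v : ι → ℝ} (hz : 0 ≤ z) (hu : 0 ≤ u) (hv : 0 ≤ v) :
    fderiv ℝ f (z + u) v ≤ fderiv ℝ f z v := by
  have hderiv (s : ℝ) : HasDerivAt (fun s : ℝ => fderiv ℝ f (z + s • u) v)
      (fderiv ℝ (fderiv ℝ f) (z + s • u) u v) s :=
    (ContinuousLinearMap.apply ℝ ℝ v).hasFDerivAt.comp_hasDerivAt s
      (hasDerivAt_comp_add_smul (hf _))
  simpa using le_of_hasDerivAt_nonpos zero_le_one hderiv
    fun s hs => hD2 _ _ _ (add_nonneg hz (smul_nonneg hs.1.le hu)) hu hv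

theorem add_le_add_of_fderiv_apply_add_le (hf : Differentiable ℝ f)
    (hDf : ∀ z u v : ι → ℝ, 0 ≤ z → 0 ≤ u → 0 ≤ v → fderiv ℝ f (z + u) v ≤ fderiv ℝ f z v)
    {x y : ι → ℝ} (hx : 0 ≤ x) (hy : 0 ≤ y) : f (x + y) + f 0 ≤ f x + f y := by
  -- `0 + t • y` keeps the shape `x + t • y` that `hasDerivAt_comp_add_smul` expects.
  have hderiv (t : ℝ) : HasDerivAt (fun t : ℝ => f (x + t • y) - f (0 + t • y))
      (fderiv ℝ f (x + t • y) y - fderiv ℝ f (0 + t • y) y) t :=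
    (hasDerivAt_comp_add_smul (hf _)).sub (hasDerivAt_comp_add_smul (hf _))
  have := le_of_hasDerivAt_nonpos zero_le_one hderiv fun t ht => by
    have hty : 0 ≤ t • y := smul_nonneg ht.1.le hy
    simpa [add_comm x] using hDf _ _ _ hty hx hy
  simp only [one_smul, zero_smul, add_zero, zero_add] at this
  linarith

end Orthant

theorem nonpositive_second_partials_subadditive_general {k : ℕ}
    (f : (Fin k → ℝ) → ℝ)
    (h0 : f 0 = 0)
    (hC2 : ContDiff ℝ 2 f)
    (hconc : ∀ x : Fin k → ℝ, (∀ i, 0 ≤ x i) → ∀ i j : Fin k,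
      fderiv ℝ (fun y => fderiv ℝ f y (Pi.single i 1)) x (Pi.single j 1) ≤ 0)
    (x y : Fin k → ℝ) (hx : ∀ i, 0 ≤ x i) (hy : ∀ i, 0 ≤ y i) :
    f (x + y) ≤ f x + f y := by
  have hf : Differentiable ℝ f := hC2.differentiable (by norm_num)
  have hDf : Differentiable ℝ (fderiv ℝ f) :=
    (hC2.fderiv_right (m := 1) (by norm_num)).differentiable (by norm_num)
  have hD2 (z u v : Fin k → ℝ) (hz : 0 ≤ z) (hu : 0 ≤ u) (hv : 0 ≤ v) :
      fderiv ℝ (fderiv ℝ f) z u v ≤ 0 :=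
    (fderiv ℝ (fderiv ℝ f) z).apply_apply_nonpos_of_single_nonpos
      (fun j i => fderiv_clm_apply_const_apply (hDf z) (Pi.single j 1) (Pi.single i 1) ▸
        hconc z hz i j) hu hv
  simpa [h0] using add_le_add_of_fderiv_apply_add_le hf
    (fun z u v hz hu hv => fderiv_apply_add_le hDf hD2 hz hu hv) hx hy

/-- Lemma on concave functions: a non-decreasing function
f : [0,∞)^k → [0,∞) with f(0) = 0, continuous second partial derivatives,
and all second partials ≤ 0 on the nonnegative orthant, is subadditive. -/
theorem nonpositive_second_partials_subadditive {k : ℕ}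
    (f : (Fin k → ℝ) → ℝ)
    (hnonneg : ∀ x : Fin k → ℝ, (∀ i, 0 ≤ x i) → 0 ≤ f x)
    (hmono : ∀ x y : Fin k → ℝ, (∀ i, 0 ≤ x i) → (∀ i, x i ≤ y i) → f x ≤ f y)
    (h0 : f 0 = 0)
    (hC2 : ContDiff ℝ 2 f)
    (hconc : ∀ x : Fin k → ℝ, (∀ i, 0 ≤ x i) → ∀ i j : Fin k,
      fderiv ℝ (fun y => fderiv ℝ f y (Pi.single i 1)) x (Pi.single j 1) ≤ 0)
    (x y : Fin k → ℝ) (hx : ∀ i, 0 ≤ x i) (hy : ∀ i, 0 ≤ y i) :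
    f (x + y) ≤ f x + f y :=
  nonpositive_second_partials_subadditive_general f h0 hC2 hconc x y hx hy
end

section
/- Let the contract functions be linear, W_i(ε) = c_i·ε with c_i > 0, and define micro-payments μ_i(q,v) = (γ·c_i/√(v/2))·|q_i| under the Laplacian mechanism L. Then: (1) each μ_i is fair (q_i = 0 implies μ_i(q,v) = 0); (2) each μ_i is arbitrage-free as a price function; (3) each μ_i is compensating: μ_i(q,v) ≥ W_i(ε_i(L_{(q,v)})). Moreover, π(Q) = Σ_i μ_i(Q) is an arbitrage-free price function with π(Q) ≥ Σ_i μ_i(Q), so the resulting framework is balanced. -/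
open MeasureTheory

/-- A mechanism `K`, viewed as a Markov kernel sending a database
x ∈ X^n to a probability distribution on outputs, has privacy loss at most
ε with respect to data item i (`ε_i(K) ≤ ε`) if for every database with
entries in X and every measurable output set S, the output probabilities
with and without item i differ by at most a factor e^ε. -/
def PrivLossLE {n : ℕ} (X : Set ℝ) (K : (Fin n → ℝ) → MeasureTheory.Measure ℝ)
    (i : Fin n) (ε : ℝ) : Prop :=
  ∀ x : Fin n → ℝ, (∀ j, x j ∈ X) → ∀ S : Set ℝ, MeasurableSet S →
    K x S ≤ ENNReal.ofReal (Real.exp ε) * K (Function.update x i 0) S ∧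
    K (Function.update x i 0) S ≤ ENNReal.ofReal (Real.exp ε) * K x S

/-- The Laplace distribution Lap(b) on ℝ, with density (1/2b)·e^{-|t|/b}. -/
noncomputable def lapMeasure (b : ℝ) : MeasureTheory.Measure ℝ :=
  MeasureTheory.volume.withDensity fun t =>
    ENNReal.ofReal ((1 / (2 * b)) * Real.exp (-|t| / b))

/-- The Laplacian mechanism for the query Q = (q, v): it returns
q·x + ρ where ρ ~ Lap(b) with b = √(v/2). -/
noncomputable def lapMech {n : ℕ} (q : Fin n → ℝ) (v : ℝ) :
    (Fin n → ℝ) → MeasureTheory.Measure ℝ := fun x =>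
  MeasureTheory.Measure.map (fun t => (∑ j, q j * x j) + t)
    (lapMeasure (Real.sqrt (v / 2)))

/-- A price function `π (q, v)` (defined for positive variances) is
arbitrage-free if whenever {(q_i, v_i)} determines (q, v), i.e. there are
coefficients c with ∑ c_i q_i = q and ∑ c_i² v_i ≤ v, then
π(q,v) ≤ ∑ π(q_i,v_i). -/
def ArbitrageFreePos {n : ℕ} (π : (Fin n → ℝ) → ℝ → ℝ) : Prop :=
  ∀ (m : ℕ) (qs : Fin m → Fin n → ℝ) (vs : Fin m → ℝ) (q : Fin n → ℝ)
    (v : ℝ) (c : Fin m → ℝ),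
    (∀ i, 0 < vs i) → 0 < v →
    ∑ i, c i • qs i = q → ∑ i, (c i) ^ 2 * vs i ≤ v →
    π q v ≤ ∑ i, π (qs i) (vs i)
/-!
For a linear functional `f`, Cauchy–Schwarz gives
`|f q| = |∑ cⱼ f qⱼ| ≤ √(∑ cⱼ² vⱼ) · √(∑ (f qⱼ)² / vⱼ) ≤ √v · ∑ |f qⱼ| / √vⱼ`,
so `|f q| / √v` is an arbitrage-free price; `μ i` is a nonnegative multiple of it for the
`i`-th coordinate, and sums of arbitrage-free prices are arbitrage-free.
For compensation, removing item `i` shifts the centre of the Laplace noise by `qᵢ xᵢ`, with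
`|qᵢ xᵢ| ≤ γ |qᵢ|`, and shifting `Lap(b)` by `d` changes its density by a factor at most `e^{|d|/b}`.
-/

open Real

lemma abs_sum_mul_le_sqrt_mul_sum_abs_div_sqrt {ι : Type*} (s : Finset ι) (c a w : ι → ℝ)
    (hw : ∀ j ∈ s, 0 < w j) :
    |∑ j ∈ s, c j * a j| ≤ √(∑ j ∈ s, c j ^ 2 * w j) * ∑ j ∈ s, |a j| / √(w j) := by
  set g : ι → ℝ := fun j => |a j| / √(w j)
  have hg : ∀ j, 0 ≤ g j := fun j => by positivity
  have hsplit : ∀ j ∈ s, |c j * a j| = |c j| * √(w j) * g j := fun j hj => by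
    have : 0 < √(w j) := sqrt_pos.2 (hw j hj)
    simp only [g, abs_mul]
    field_simp
  have hsq : ∀ j ∈ s, (|c j| * √(w j)) ^ 2 = c j ^ 2 * w j := fun j hj => by
    rw [mul_pow, sq_abs, sq_sqrt (hw j hj).le]
  calc |∑ j ∈ s, c j * a j| ≤ ∑ j ∈ s, |c j| * √(w j) * g j :=
        (Finset.abs_sum_le_sum_abs _ _).trans_eq (Finset.sum_congr rfl hsplit)
    _ ≤ √(∑ j ∈ s, (|c j| * √(w j)) ^ 2) * √(∑ j ∈ s, g j ^ 2) :=
        sum_mul_le_sqrt_mul_sqrt _ _ _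
    _ ≤ √(∑ j ∈ s, c j ^ 2 * w j) * ∑ j ∈ s, g j := by
        rw [Finset.sum_congr rfl hsq]
        gcongr
        exact (sqrt_le_left (Finset.sum_nonneg fun j _ => hg j)).2
          (Finset.sum_sq_le_sq_sum_of_nonneg fun j _ => hg j)

section ArbitrageFree

variable {n : ℕ}

lemma arbitrageFreePos_abs_div_sqrt (f : (Fin n → ℝ) →ₗ[ℝ] ℝ) :
    ArbitrageFreePos fun q v => |f q| / √v := by
  intro m qs vs q v c hvs hv hq hcv
  have hfq : f q = ∑ j, c j * f (qs j) := by simp [← hq, map_sum, map_smul]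
  dsimp only
  rw [hfq, div_le_iff₀ (sqrt_pos.2 hv), mul_comm]
  calc |∑ j, c j * f (qs j)| ≤ √(∑ j, c j ^ 2 * vs j) * ∑ j, |f (qs j)| / √(vs j) :=
        abs_sum_mul_le_sqrt_mul_sum_abs_div_sqrt _ _ _ _ fun j _ => hvs j
    _ ≤ √v * ∑ j, |f (qs j)| / √(vs j) := by gcongr

lemma ArbitrageFreePos.const_mul {p : (Fin n → ℝ) → ℝ → ℝ} (hp : ArbitrageFreePos p)
    {a : ℝ} (ha : 0 ≤ a) : ArbitrageFreePos fun q v => a * p q v := by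
  intro m qs vs q v c hvs hv hq hcv
  rw [← Finset.mul_sum]
  exact mul_le_mul_of_nonneg_left (hp m qs vs q v c hvs hv hq hcv) ha

lemma ArbitrageFreePos.sum {ι : Type*} (s : Finset ι) {p : ι → (Fin n → ℝ) → ℝ → ℝ}
    (hp : ∀ i ∈ s, ArbitrageFreePos (p i)) : ArbitrageFreePos fun q v => ∑ i ∈ s, p i q v := by
  intro m qs vs q v c hvs hv hq hcv
  rw [Finset.sum_comm]
  exact Finset.sum_le_sum fun i hi => hp i hi m qs vs q v c hvs hv hq hcv

end ArbitrageFree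

section Laplace

noncomputable def lapDensity (b t : ℝ) : ℝ := 1 / (2 * b) * exp (-|t| / b)

lemma lapMeasure_eq_withDensity (b : ℝ) :
    lapMeasure b = volume.withDensity fun t => ENNReal.ofReal (lapDensity b t) := rfl

lemma lapMeasure_map_const_add (b s : ℝ) :
    (lapMeasure b).map (s + ·) =
      volume.withDensity fun u => ENNReal.ofReal (lapDensity b (u - s)) := by
  ext S hS
  have hemb := measurableEmbedding_addLeft s
  rw [hemb.map_apply, withDensity_apply _ hS, lapMeasure_eq_withDensity,
    withDensity_apply' _ _, ← (measurePreserving_add_left volume s).setLIntegral_comp_preimage_emb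
      hemb (fun u => ENNReal.ofReal (lapDensity b (u - s)))]
  simp only [add_sub_cancel_left]

lemma lapDensity_sub_le {b : ℝ} (hb : 0 < b) {s s' ε : ℝ} (h : |s - s'| ≤ ε * b) (u : ℝ) :
    lapDensity b (u - s) ≤ exp ε * lapDensity b (u - s') := by
  have htri : |u - s'| - |u - s| ≤ |s - s'| := by
    simpa using abs_sub_abs_le_abs_sub (u - s') (u - s)
  have hexp : -|u - s| / b ≤ ε + -|u - s'| / b := by
    rw [add_div' _ _ _ hb.ne', div_le_div_iff_of_pos_right hb]
    linarith
  unfold lapDensity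
  rw [mul_left_comm, ← exp_add]
  gcongr

lemma lapMeasure_map_const_add_le {b : ℝ} (hb : 0 < b) {s s' ε : ℝ} (h : |s - s'| ≤ ε * b) :
    (lapMeasure b).map (s + ·) ≤ ENNReal.ofReal (exp ε) • (lapMeasure b).map (s' + ·) := by
  rw [lapMeasure_map_const_add, lapMeasure_map_const_add,
    ← withDensity_smul' _ _ ENNReal.ofReal_ne_top]
  refine withDensity_mono (Filter.Eventually.of_forall fun u => ?_)
  simp only [Pi.smul_apply, smul_eq_mul, ← ENNReal.ofReal_mul (exp_nonneg ε)]
  exact ENNReal.ofReal_le_ofReal (lapDensity_sub_le hb h u)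

end Laplace

lemma sum_mul_sub_sum_mul_update_zero {ι : Type*} [Fintype ι] [DecidableEq ι]
    (q x : ι → ℝ) (i : ι) :
    ∑ j, q j * x j - ∑ j, q j * Function.update x i 0 j = q i * x i := by
  rw [← Finset.sum_sub_distrib, Finset.sum_eq_single i (fun j _ hji => by simp [hji]) (by simp)]
  simp

lemma privLossLE_lapMech {n : ℕ} {X : Set ℝ} {γ : ℝ} (hγ : ∀ y ∈ X, |y| ≤ γ)
    (q : Fin n → ℝ) {v : ℝ} (hv : 0 < v) (i : Fin n) {ε : ℝ} (hε : γ * |q i| ≤ ε * √(v / 2)) :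
    PrivLossLE X (lapMech q v) i ε := by
  intro x hx S _
  have hb : 0 < √(v / 2) := sqrt_pos.2 (half_pos hv)
  have hshift : |∑ j, q j * x j - ∑ j, q j * Function.update x i 0 j| ≤ ε * √(v / 2) := by
    rw [sum_mul_sub_sum_mul_update_zero, abs_mul, mul_comm]
    exact (mul_le_mul_of_nonneg_right (hγ _ (hx i)) (abs_nonneg _)).trans hε
  exact ⟨lapMeasure_map_const_add_le hb hshift S,
    lapMeasure_map_const_add_le hb (by rwa [abs_sub_comm]) S⟩

/-- with linear contracts W_i(ε) = c_i·ε (c_i > 0) and the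
Laplacian mechanism, the micro-payments μ_i(q,v) = (γ·c_i/√(v/2))·|q_i| are
fair, micro arbitrage-free, and compensating (ε_i(L_(q,v)) ≤ μ_i(q,v)/c_i);
moreover π = ∑ μ_i is arbitrage-free and cost-recovering, so the framework
is balanced. -/
theorem balanced_framework_laplace {n : ℕ} (X : Set ℝ) (γ : ℝ)
    (hγ0 : 0 ≤ γ) (hγ : ∀ y ∈ X, |y| ≤ γ)
    (cs : Fin n → ℝ) (hcs : ∀ i, 0 < cs i)
    (μ : Fin n → (Fin n → ℝ) → ℝ → ℝ)
    (hμ : ∀ (i : Fin n) (q : Fin n → ℝ) (v : ℝ),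
      μ i q v = γ * cs i / Real.sqrt (v / 2) * |q i|) :
    (∀ (i : Fin n) (q : Fin n → ℝ) (v : ℝ), q i = 0 → μ i q v = 0) ∧
    (∀ i, ArbitrageFreePos (μ i)) ∧
    (∀ (i : Fin n) (q : Fin n → ℝ) (v : ℝ), 0 < v →
      PrivLossLE X (lapMech q v) i (μ i q v / cs i)) ∧
    ArbitrageFreePos (fun q v => ∑ i, μ i q v) ∧
    (∀ (q : Fin n → ℝ) (v : ℝ), ∑ i, μ i q v ≤ ∑ i, μ i q v) := by
  have hμ_eq : μ = fun i q v => γ * cs i * √2 * (|q i| / √v) := by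
    ext i q v
    rw [hμ, sqrt_div' _ zero_le_two]
    field_simp
  have micro : ∀ i, ArbitrageFreePos (μ i) := fun i => by
    rw [hμ_eq]
    exact (arbitrageFreePos_abs_div_sqrt (LinearMap.proj i)).const_mul
      (mul_nonneg (mul_nonneg hγ0 (hcs i).le) (sqrt_nonneg 2))
  refine ⟨fun i q v hqi => by rw [hμ, hqi, abs_zero, mul_zero], micro,
    fun i q v hv => privLossLE_lapMech hγ q hv i (le_of_eq ?_),
    ArbitrageFreePos.sum _ fun i _ => micro i, fun _ _ => le_rfl⟩
  rw [hμ]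
  field_simp [(hcs i).ne']
end
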